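/- arXiv:1010.0131 — 4 statements merged into one kernel-verified Lean document; each statement's English description precedes it below -/
import Mathlib

section
/- Let U_1, ..., U_n be independent uniform random variables on (0,1] and α_1, ..., α_n distinct positive reals. Then for 0 < s ≤ 1, P[U_1^{1/α_1} · ... · U_n^{1/α_n} ≤ s] = ∑_{j=1}^{n} C_{j,n} s^{α_j}, where C_{j,n} = ∏_{k≠j} α_k/(α_k − α_j). -/
/-!
Conditioning on the first factor `U₀ = v`, the event becomes
`∏_{i ≥ 1} U_i ^ (1 / α_i) ≤ s / v ^ (1 / α₀)`. Its probability is `1` for `v ≤ s ^ α₀` and, by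
induction, `∑_j C_j (s / v ^ (1 / α₀)) ^ α_j` for `v > s ^ α₀`; integrating in `v` leaves a linear
combination of `s ^ α₀` and the `s ^ α_j`. The new coefficients are again of the form `C_{j,n+1}`:
for `j ≥ 1` this is a one-factor recursion, and for `j = 0` it follows from `∑_j C_{j,n} = 1`,
which holds because `C_{j,n}` is the value at `0` of the `j`-th Lagrange basis polynomial of the
nodes `α`. Proving the formula first for `s < 1` lets the induction start at `n = 0`, where the
product is empty; at `s = 1` both sides equal `1`.
-/

open MeasureTheory ProbabilityTheory Finset

theorem Fin.prod_univ_erase_succ {M : Type*} [CommMonoid M] {n : ℕ} (f : Fin (n + 1) → M)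
    (j : Fin n) : ∏ k ∈ univ.erase j.succ, f k = f 0 * ∏ k ∈ univ.erase j, f k.succ := by
  rw [Fin.univ_succ, erase_cons_of_ne _ (Fin.succ_ne_zero j).symm, Finset.prod_cons]
  erw [← map_erase, prod_map]
  rfl

section LagrangeWeight

variable {K ι : Type*} [Field K] [Fintype ι] [DecidableEq ι]

def lagrangeWeight (α : ι → K) (j : ι) : K := ∏ k ∈ univ.erase j, α k / (α k - α j)

theorem sum_lagrangeWeight [Nonempty ι] {α : ι → K} (hα : Function.Injective α) :
    ∑ j, lagrangeWeight α j = 1 := by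
  have h := congrArg (Polynomial.eval 0) (Lagrange.sum_basis hα.injOn univ_nonempty)
  rw [Polynomial.eval_finsetSum, Polynomial.eval_one] at h
  rw [← h]
  refine sum_congr rfl fun j _ => ?_
  simp only [Lagrange.basis, Lagrange.basisDivisor, Polynomial.eval_prod, Polynomial.eval_mul,
    Polynomial.eval_C, Polynomial.eval_sub, Polynomial.eval_X, zero_sub, lagrangeWeight]
  refine prod_congr rfl fun k _ => ?_
  rw [inv_mul_eq_div, ← neg_sub, div_neg, neg_div]

theorem lagrangeWeight_succ {n : ℕ} (α : Fin (n + 1) → K) (j : Fin n) :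
    lagrangeWeight α j.succ = α 0 / (α 0 - α j.succ) * lagrangeWeight (Fin.tail α) j := by
  rw [lagrangeWeight, Fin.prod_univ_erase_succ]
  rfl

end LagrangeWeight

theorem sum_lagrangeWeight_mul_rpow_succ {n : ℕ} {α : Fin (n + 1) → ℝ}
    (hα : Function.Injective α) (s : ℝ) :
    ∑ j, lagrangeWeight α j * s ^ α j = s ^ α 0 + ∑ j : Fin n,
      lagrangeWeight (Fin.tail α) j * (α 0 / (α 0 - α j.succ) * (s ^ α j.succ - s ^ α 0)) := by
  have h := sum_lagrangeWeight hα
  rw [Fin.sum_univ_succ] at h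
  have hterm : ∀ j : Fin n, lagrangeWeight (Fin.tail α) j *
      (α 0 / (α 0 - α j.succ) * (s ^ α j.succ - s ^ α 0)) =
        lagrangeWeight α j.succ * s ^ α j.succ - lagrangeWeight α j.succ * s ^ α 0 := by
    intro j
    rw [lagrangeWeight_succ]
    ring
  rw [Fin.sum_univ_succ, eq_sub_of_add_eq h, sum_congr rfl fun j _ => hterm j, sum_sub_distrib,
    ← sum_mul]
  ring

theorem measureReal_pi_eq_integral_cons {X : Type*} [MeasurableSpace X] (ν : Measure X)
    [IsFiniteMeasure ν] {n : ℕ} {S : Set (Fin (n + 1) → X)} (hS : MeasurableSet S) :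
    (Measure.pi fun _ => ν).real S =
      ∫ v, (Measure.pi fun _ => ν).real {y | Fin.cons v y ∈ S} ∂ν := by
  have hmp := (measurePreserving_piFinSuccAbove (fun _ : Fin (n + 1) => ν) 0).symm
  have hS' : MeasurableSet ((MeasurableEquiv.piFinSuccAbove (fun _ => X) 0).symm ⁻¹' S) :=
    (MeasurableEquiv.measurable _) hS
  rw [measureReal_def, ← hmp.measure_preimage hS.nullMeasurableSet, Measure.prod_apply hS',
    ← integral_toReal (measurable_measure_prodMk_left hS').aemeasurable
      (Filter.Eventually.of_forall fun _ => measure_lt_top _ _)]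
  simp only [Set.preimage, MeasurableEquiv.piFinSuccAbove_symm_apply, Fin.insertNthEquiv,
    Fin.zero_succAbove, Fin.insertNth_zero', Fin.removeNth_zero, Equiv.coe_fn_mk,
    Set.mem_ofPred_eq, measureReal_def]

instance : IsProbabilityMeasure (volume.restrict (Set.Ioc (0 : ℝ) 1)) := ⟨by simp⟩

noncomputable def prodRpowCDF {n : ℕ} (α : Fin n → ℝ) (t : ℝ) : ℝ :=
  (Measure.pi fun _ : Fin n => volume.restrict (Set.Ioc (0 : ℝ) 1)).real
    {x | ∏ i, x i ^ (1 / α i) ≤ t}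

theorem prodRpowCDF_of_one_le {n : ℕ} {α : Fin n → ℝ} (hα : ∀ i, 0 ≤ α i) {t : ℝ}
    (ht : 1 ≤ t) : prodRpowCDF α t = 1 := by
  refine le_antisymm measureReal_le_one ?_
  calc (1 : ℝ) = (Measure.pi fun _ : Fin n => volume.restrict (Set.Ioc (0 : ℝ) 1)).real
        (Set.univ.pi fun _ => Set.Ioc 0 1) := by simp [measureReal_def, Measure.pi_pi]
    _ ≤ prodRpowCDF α t := by
      refine measureReal_mono fun x hx => ?_
      simp only [Set.mem_pi, Set.mem_univ, true_implies, Set.mem_Ioc] at hx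
      refine le_trans (prod_le_one (fun i _ => Real.rpow_nonneg (hx i).1.le _) fun i _ => ?_) ht
      exact Real.rpow_le_one (hx i).1.le (hx i).2 (by have := hα i; positivity)

theorem prodRpowCDF_succ {n : ℕ} (α : Fin (n + 1) → ℝ) (s : ℝ) :
    prodRpowCDF α s = ∫ v in Set.Ioc 0 1, prodRpowCDF (Fin.tail α) (s / v ^ (1 / α 0)) := by
  have hS : MeasurableSet {x : Fin (n + 1) → ℝ | ∏ i, x i ^ (1 / α i) ≤ s} :=
    measurableSet_le (by fun_prop) measurable_const
  rw [prodRpowCDF, measureReal_pi_eq_integral_cons _ hS]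
  refine setIntegral_congr_fun measurableSet_Ioc fun v hv => ?_
  have hvγ : 0 < v ^ (1 / α 0) := Real.rpow_pos_of_pos hv.1 _
  simp only [prodRpowCDF, Fin.prod_univ_succ, le_div_iff₀' hvγ]
  rfl

theorem one_le_div_rpow_inv_iff {s v γ : ℝ} (hs : 0 < s) (hv : 0 < v) (hγ : 0 < γ) :
    1 ≤ s / v ^ (1 / γ) ↔ v ≤ s ^ γ := by
  rw [one_le_div (by positivity), one_div, Real.rpow_inv_le_iff_of_pos hv.le hs.le hγ]

theorem div_rpow_inv_rpow_eq {s v γ β : ℝ} (hs : 0 ≤ s) (hv : 0 < v) :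
    (s / v ^ (1 / γ)) ^ β = s ^ β * v ^ (-(β / γ)) := by
  rw [Real.div_rpow hs (by positivity), ← Real.rpow_mul hv.le, Real.rpow_neg hv.le,
    div_eq_mul_inv, one_div_mul_eq_div]

theorem intervalIntegrable_div_rpow_inv_rpow {s γ β a b : ℝ} (hs : 0 < s) (ha : 0 < a)
    (hb : 0 < b) : IntervalIntegrable (fun v => (s / v ^ (1 / γ)) ^ β) volume a b := by
  refine ContinuousOn.intervalIntegrable fun v hv => ?_
  have : 0 < v := (lt_min ha hb).trans_le hv.1
  fun_prop (disch := first | positivity | exact Or.inl (by positivity))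

theorem integral_div_rpow_inv_rpow {s γ β : ℝ} (hs : 0 < s) (hγ : 0 < γ) (hβγ : β ≠ γ) :
    ∫ v in s ^ γ..1, (s / v ^ (1 / γ)) ^ β = γ / (γ - β) * (s ^ β - s ^ γ) := by
  have hpos : ∀ v ∈ Set.uIcc (s ^ γ) 1, 0 < v :=
    fun v hv => (lt_min (Real.rpow_pos_of_pos hs γ) one_pos).trans_le hv.1
  have hr : -(β / γ) ≠ -1 := fun h => hβγ ((div_eq_one_iff_eq hγ.ne').1 (neg_injective h))
  have hγβ : γ - β ≠ 0 := sub_ne_zero.2 hβγ.symm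
  have hexp : -(β / γ) + 1 = (γ - β) / γ := by field_simp; ring
  rw [intervalIntegral.integral_congr fun v hv => div_rpow_inv_rpow_eq hs.le (hpos v hv),
    intervalIntegral.integral_const_mul, integral_rpow (Or.inr ⟨hr, fun h => (hpos 0 h).false⟩),
    Real.one_rpow, ← Real.rpow_mul hs.le, hexp, mul_div_cancel₀ _ hγ.ne', Real.rpow_sub hs]
  field_simp

theorem integrableOn_sum_mul_div_rpow_inv_rpow {n : ℕ} (c β : Fin n → ℝ) {s γ a b : ℝ}
    (hs : 0 < s) (ha : 0 < a) (hab : a ≤ b) :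
    IntegrableOn (fun v => ∑ j, c j * (s / v ^ (1 / γ)) ^ β j) (Set.Ioc a b) :=
  integrable_finsetSum _ fun _ _ => ((intervalIntegrable_iff_integrableOn_Ioc_of_le hab).1
    (intervalIntegrable_div_rpow_inv_rpow hs ha (ha.trans_le hab))).const_mul _

theorem setIntegral_sum_mul_div_rpow_inv_rpow {n : ℕ} (c β : Fin n → ℝ) {s γ : ℝ} (hs : 0 < s)
    (hs1 : s ≤ 1) (hγ : 0 < γ) (hβγ : ∀ j, β j ≠ γ) :
    ∫ v in Set.Ioc (s ^ γ) 1, ∑ j, c j * (s / v ^ (1 / γ)) ^ β j =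
      ∑ j, c j * (γ / (γ - β j) * (s ^ β j - s ^ γ)) := by
  have ha : 0 < s ^ γ := Real.rpow_pos_of_pos hs γ
  have ha1 : s ^ γ ≤ 1 := Real.rpow_le_one hs.le hs1 hγ.le
  rw [integral_finsetSum _ fun j _ => (intervalIntegrable_iff_integrableOn_Ioc_of_le ha1).1
    ((intervalIntegrable_div_rpow_inv_rpow hs ha one_pos).const_mul (c j))]
  refine sum_congr rfl fun j _ => ?_
  rw [integral_const_mul, ← intervalIntegral.integral_of_le ha1,
    integral_div_rpow_inv_rpow hs hγ (hβγ j)]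

theorem prodRpowCDF_eq_of_lt_one {n : ℕ} {α : Fin n → ℝ} (hα : ∀ i, 0 < α i)
    (hinj : Function.Injective α) {s : ℝ} (hs : 0 < s) (hs1 : s < 1) :
    prodRpowCDF α s = ∑ j, lagrangeWeight α j * s ^ α j := by
  induction n generalizing s with
  | zero => simp [prodRpowCDF, hs1.not_ge]
  | succ n ih =>
    set γ := α 0
    set β := Fin.tail α
    have hγ : 0 < γ := hα 0
    have hβγ : ∀ j, β j ≠ γ := fun j h => Fin.succ_ne_zero j (hinj h)
    have ha : 0 < s ^ γ := Real.rpow_pos_of_pos hs γ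
    have ha1 : s ^ γ ≤ 1 := Real.rpow_le_one hs.le hs1.le hγ.le
    set f := fun v : ℝ => prodRpowCDF β (s / v ^ (1 / γ))
    set g := fun v : ℝ => ∑ j, lagrangeWeight β j * (s / v ^ (1 / γ)) ^ β j
    have hlow : Set.EqOn f (fun _ => 1) (Set.Ioc 0 (s ^ γ)) := fun v hv =>
      prodRpowCDF_of_one_le (fun i => (hα _).le) ((one_le_div_rpow_inv_iff hs hv.1 hγ).2 hv.2)
    have hhigh : Set.EqOn f g (Set.Ioc (s ^ γ) 1) := fun v hv =>
      ih (fun i => hα _) (hinj.comp (Fin.succ_injective _)) (by have := ha.trans hv.1; positivity)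
        (not_le.1 fun h => ((one_le_div_rpow_inv_iff hs (ha.trans hv.1) hγ).1 h).not_gt hv.1)
    have hg : IntegrableOn g (Set.Ioc (s ^ γ) 1) :=
      integrableOn_sum_mul_div_rpow_inv_rpow _ _ hs ha ha1
    calc prodRpowCDF α s = ∫ v in Set.Ioc 0 (s ^ γ) ∪ Set.Ioc (s ^ γ) 1, f v := by
          rw [Set.Ioc_union_Ioc_eq_Ioc ha.le ha1]; exact prodRpowCDF_succ α s
      _ = (∫ _ in Set.Ioc 0 (s ^ γ), (1 : ℝ)) + ∫ v in Set.Ioc (s ^ γ) 1, g v := by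
          rw [setIntegral_union (Set.Ioc_disjoint_Ioc_of_le le_rfl) measurableSet_Ioc
            ((integrableOn_const measure_Ioc_lt_top.ne).congr_fun hlow.symm measurableSet_Ioc)
            (hg.congr_fun hhigh.symm measurableSet_Ioc),
            setIntegral_congr_fun measurableSet_Ioc hlow,
            setIntegral_congr_fun measurableSet_Ioc hhigh]
      _ = s ^ γ + ∑ j, lagrangeWeight β j * (γ / (γ - β j) * (s ^ β j - s ^ γ)) := by
          rw [setIntegral_const, Real.volume_real_Ioc_of_le ha.le, sub_zero, smul_eq_mul, mul_one,
            setIntegral_sum_mul_div_rpow_inv_rpow _ _ hs hs1.le hγ hβγ]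
      _ = ∑ j, lagrangeWeight α j * s ^ α j := (sum_lagrangeWeight_mul_rpow_succ hinj s).symm

theorem prodRpowCDF_eq {n : ℕ} [Nonempty (Fin n)] {α : Fin n → ℝ} (hα : ∀ i, 0 < α i)
    (hinj : Function.Injective α) {s : ℝ} (hs : 0 < s) (hs1 : s ≤ 1) :
    prodRpowCDF α s = ∑ j, lagrangeWeight α j * s ^ α j := by
  rcases hs1.lt_or_eq with hs1 | rfl
  · exact prodRpowCDF_eq_of_lt_one hα hinj hs hs1
  · simp [prodRpowCDF_of_one_le (fun i => (hα i).le) le_rfl, sum_lagrangeWeight hinj]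

theorem stmt_8 {Ω : Type*} [MeasurableSpace Ω] (μ : Measure Ω) [IsProbabilityMeasure μ]
    (n : ℕ) (hn : 1 ≤ n) (U : Fin n → Ω → ℝ) (hU : ∀ i, Measurable (U i))
    (hUnif : ∀ i, Measure.map (U i) μ = volume.restrict (Set.Ioc (0 : ℝ) 1))
    (hindep : iIndepFun U μ)
    (α : Fin n → ℝ) (hα : ∀ i, 0 < α i) (hdist : Function.Injective α)
    (s : ℝ) (hs : 0 < s) (hs1 : s ≤ 1) :
    μ {ω | ∏ i, U i ω ^ (1 / α i) ≤ s}
      = ENNReal.ofReal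
          (∑ j, (∏ k ∈ Finset.univ.erase j, α k / (α k - α j)) * s ^ (α j)) := by
  have : Nonempty (Fin n) := Fin.pos_iff_nonempty.1 hn
  have hlaw : μ.map (fun ω i => U i ω) = Measure.pi fun _ => volume.restrict (Set.Ioc 0 1) := by
    simp only [hindep.map_fun_eq_pi_map fun i => (hU i).aemeasurable, hUnif]
  have hS : MeasurableSet {x : Fin n → ℝ | ∏ i, x i ^ (1 / α i) ≤ s} :=
    measurableSet_le (by fun_prop) measurable_const
  change _ = ENNReal.ofReal (∑ j, lagrangeWeight α j * s ^ α j)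
  rw [← prodRpowCDF_eq hα hdist hs hs1, prodRpowCDF, ofReal_measureReal, ← hlaw,
    Measure.map_apply (measurable_pi_lambda _ hU) hS]
  rfl
end

section
/- For distinct positive reals α ≠ γ and integers k, l ≥ 1, define e_{r,k+l} := ∑_{s=1}^{min(r,k)} (−1)^s ((s)_{r−s}/(r−s)!)((l)_{k−s}/(k−s)!) where (w)_m denotes the Pochhammer symbol (rising factorial). Then (α/(α−γ))^k (γ/(γ−α))^l [ ∑_{s=1}^{k} ((l)_{k−s}/(k−s)!)((α−γ)/α)^s − ∑_{r=1}^{k+l−1} e_{r,k+l} ((γ−α)/γ)^r ] = 1. -/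
/-!
Put `a = α / (α - γ)` and `b = γ / (γ - α)`, so that `a + b = 1`, `(α - γ) / α = a⁻¹` and
`(γ - α) / γ = b⁻¹`. The Pochhammer quotients are binomial coefficients, and `e_{r,k+l}` is, up to
sign, an `(r - 1)`-st forward difference of `x ↦ x.choose (l - 1)`; hence `e_{r,k+l}` equals
`-C(k + l - 1 - r, l - r)` for `r ≤ l` and vanishes for `r > l`. Multiplied by `a ^ k * b ^ l`, the
bracket becomes `∑_{j<k} C(l - 1 + j, j) b^l a^j + ∑_{j<l} C(k - 1 + j, j) a^k b^j`: the
probabilities of the two outcomes in Pascal's problem of points, which add up to `1` by a double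
induction on `k` and `l` driven by Pascal's rule.
-/

open Finset Nat fwdDiff

lemma ascPochhammer_eval_natCast_div_factorial {K : Type*} [Field K] [CharZero K] (n j : ℕ) :
    (ascPochhammer K j).eval (n : K) / (j ! : K) = ((n + j - 1).choose j : K) := by
  rw [← ascPochhammer_eval_cast, ascPochhammer_nat_eq_ascFactorial,
    ascFactorial_eq_factorial_mul_choose', cast_mul,
    mul_div_cancel_left₀ _ (by exact_mod_cast j.factorial_ne_zero)]

lemma sum_Icc_one_reflect {M : Type*} [AddCommMonoid M] (f : ℕ → M) (n : ℕ) :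
    ∑ s ∈ Icc 1 n, f (n - s) = ∑ j ∈ range n, f j := by
  rw [← Ico_add_one_right_eq_Icc, sum_Ico_reflect f 1 le_rfl, Nat.add_sub_cancel, Nat.sub_self,
    Nat.Ico_zero_eq_range]

lemma fwdDiff_iter_choose_eq_zero_of_lt {m p : ℕ} (h : p < m) :
    (Δ_[1])^[m] (fun x ↦ x.choose p : ℕ → ℤ) = 0 := by
  obtain ⟨d, rfl⟩ := Nat.exists_eq_add_of_lt h
  have hp : (Δ_[1])^[p] (fun x ↦ x.choose p : ℕ → ℤ) = fun _ ↦ 1 := by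
    simpa using fwdDiff_iter_choose 0 p
  rw [show p + d + 1 = d + 1 + p by ring, Function.iterate_add_apply, hp,
    Function.iterate_succ_apply, fwdDiff_const]
  exact Function.iterate_fixed (fwdDiff_const 1 0) d

lemma sum_range_neg_one_pow_mul_choose_mul_choose (m n p : ℕ) :
    ∑ i ∈ range (m + 1), (-1 : ℤ) ^ (m - i) * m.choose i * (n + i).choose p
      = if m ≤ p then (n.choose (p - m) : ℤ) else 0 := by
  have h := fwdDiff_iter_eq_sum_shift (1 : ℕ) (fun x ↦ x.choose p : ℕ → ℤ) m n
  simp only [smul_eq_mul, mul_one] at h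
  rw [← h]
  split_ifs with hmp
  · obtain ⟨j, rfl⟩ := Nat.exists_eq_add_of_le hmp
    rw [fwdDiff_iter_choose, Nat.add_sub_cancel_left]
  · rw [fwdDiff_iter_choose_eq_zero_of_lt (not_le.mp hmp), Pi.zero_apply]

section NegBinomial

variable {R : Type*} [CommRing R]

def negBinomialSum (a b : R) (k l : ℕ) : R :=
  a ^ (k + 1) * ∑ j ∈ range l, ((k + j).choose j : R) * b ^ j

lemma negBinomialSum_zero_left (a b : R) (l : ℕ) :
    negBinomialSum a b 0 l = a * ∑ j ∈ range l, b ^ j := by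
  simp [negBinomialSum]

lemma negBinomialSum_one_right (a b : R) (k : ℕ) :
    negBinomialSum a b k 1 = a ^ (k + 1) := by
  simp [negBinomialSum]

lemma negBinomialSum_succ_succ (a b : R) (k l : ℕ) :
    negBinomialSum a b (k + 1) (l + 1)
      = a * negBinomialSum a b k (l + 1) + b * negBinomialSum a b (k + 1) l := by
  have pascal : ∀ j, ((k + 1 + (j + 1)).choose (j + 1) : R)
      = (k + (j + 1)).choose (j + 1) + (k + 1 + j).choose j := by
    intro j
    rw [show k + 1 + (j + 1) = (k + 1 + j) + 1 by ring, choose_succ_succ',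
      show k + 1 + j = k + (j + 1) by ring]
    push_cast
    ring
  have hsum : ∑ j ∈ range (l + 1), ((k + 1 + j).choose j : R) * b ^ j
      = ∑ j ∈ range (l + 1), ((k + j).choose j : R) * b ^ j
        + b * ∑ j ∈ range l, ((k + 1 + j).choose j : R) * b ^ j := by
    rw [sum_range_succ' _ l, sum_range_succ' (fun j ↦ ((k + j).choose j : R) * b ^ j) l, mul_sum]
    simp only [pascal, add_mul, sum_add_distrib, add_zero, choose_zero_right]
    rw [add_right_comm]
    congr 1
    exact sum_congr rfl fun j _ ↦ by ring
  simp only [negBinomialSum, hsum]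
  ring

lemma negBinomialSum_zero_add_negBinomialSum_one (a b : R) (hab : a + b = 1) (l : ℕ) :
    negBinomialSum a b 0 (l + 1) + negBinomialSum b a l 1 = 1 := by
  rw [negBinomialSum_zero_left, negBinomialSum_one_right, eq_sub_of_add_eq hab,
    mul_neg_geom_sum]
  ring

theorem negBinomialSum_add_negBinomialSum {a b : R} (hab : a + b = 1) (k l : ℕ) :
    negBinomialSum a b k (l + 1) + negBinomialSum b a l (k + 1) = 1 := by
  induction k generalizing l with
  | zero => exact negBinomialSum_zero_add_negBinomialSum_one a b hab l
  | succ k ihk =>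
    induction l with
    | zero =>
      rw [add_comm]
      exact negBinomialSum_zero_add_negBinomialSum_one b a (by rw [add_comm, hab]) (k + 1)
    | succ l ihl =>
      rw [negBinomialSum_succ_succ a b k, negBinomialSum_succ_succ b a l]
      linear_combination a * ihk (l + 1) + b * ihl + hab

end NegBinomial

lemma pow_mul_sum_Icc_inv_pow {K : Type*} [Field K] {a : K} (ha : a ≠ 0) (c : ℕ → K) (n : ℕ) :
    a ^ n * ∑ s ∈ Icc 1 n, c (n - s) * a⁻¹ ^ s = ∑ j ∈ range n, c j * a ^ j := by
  rw [mul_sum, ← sum_Icc_one_reflect (fun j ↦ c j * a ^ j)]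
  refine sum_congr rfl fun s hs ↦ ?_
  rw [inv_pow, pow_sub₀ a ha (mem_Icc.mp hs).2]
  ring

noncomputable def eCoeff (k l r : ℕ) : ℝ :=
  ∑ s ∈ Icc 1 (min r k), (-1 : ℝ) ^ s *
    ((ascPochhammer ℝ (r - s)).eval (s : ℝ) / (r - s)!) *
    ((ascPochhammer ℝ (k - s)).eval (l : ℝ) / (k - s)!)

lemma eCoeff_succ_succ {k l r : ℕ} (hr : 1 ≤ r) (hrkl : r ≤ k + l + 1) :
    eCoeff (k + 1) (l + 1) r
      = if r ≤ l + 1 then -((k + (l + 1 - r)).choose (l + 1 - r) : ℝ) else 0 := by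
  obtain ⟨m, rfl⟩ : ∃ m, r = m + 1 := ⟨r - 1, by omega⟩
  set g : ℕ → ℝ := fun i ↦ (-1) ^ (m - i) * m.choose i * (k + l - m + i).choose l with hg
  have hterm : ∀ s ∈ Icc 1 (min (m + 1) (k + 1)), (-1 : ℝ) ^ s *
      ((ascPochhammer ℝ (m + 1 - s)).eval (s : ℝ) / (m + 1 - s)!) *
      ((ascPochhammer ℝ (k + 1 - s)).eval ((l + 1 : ℕ) : ℝ) / (k + 1 - s)!) = -g (m + 1 - s) := by
    intro s hs
    simp only [mem_Icc, le_min_iff] at hs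
    obtain ⟨hs1, hsm, hsk⟩ := hs
    obtain ⟨t, rfl⟩ : ∃ t, s = t + 1 := ⟨s - 1, by omega⟩
    rw [ascPochhammer_eval_natCast_div_factorial, ascPochhammer_eval_natCast_div_factorial]
    simp only [hg]
    rw [show t + 1 + (m + 1 - (t + 1)) - 1 = m by omega, show m - (m + 1 - (t + 1)) = t by omega,
      show l + 1 + (k + 1 - (t + 1)) - 1 = l + (k - t) by omega,
      show k + l - m + (m + 1 - (t + 1)) = l + (k - t) by omega,
      show k + 1 - (t + 1) = k - t by omega, choose_symm_add, pow_succ]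
    ring
  have hsum : ∑ i ∈ range (m + 1), g i
      = if m ≤ l then ((k + l - m).choose (l - m) : ℝ) else 0 := by
    simp only [hg]
    exact_mod_cast sum_range_neg_one_pow_mul_choose_mul_choose m (k + l - m) l
  calc eCoeff (k + 1) (l + 1) (m + 1)
      = -∑ s ∈ Icc 1 (min (m + 1) (k + 1)), g (m + 1 - s) := by
        rw [eCoeff, ← sum_neg_distrib]
        exact sum_congr rfl hterm
    _ = -∑ s ∈ Icc 1 (m + 1), g (m + 1 - s) := by
        congr 1
        refine sum_subset (Icc_subset_Icc_right (min_le_left _ _)) fun s hs hs' ↦ ?_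
        simp only [mem_Icc, le_min_iff, not_and, not_le] at hs hs'
        simp [hg, choose_eq_zero_of_lt (show k + l - m + (m + 1 - s) < l by omega)]
    _ = _ := by
        rw [sum_Icc_one_reflect, hsum]
        by_cases hml : m ≤ l
        · rw [if_pos hml, if_pos (by omega), show k + l - m = k + (l + 1 - (m + 1)) by omega,
            show l - m = l + 1 - (m + 1) by omega]
        · rw [if_neg hml, if_neg (by omega), neg_zero]

lemma pow_mul_sum_eCoeff_mul_inv_pow {b : ℝ} (hb : b ≠ 0) (k l : ℕ) :
    b ^ (l + 1) * ∑ r ∈ Icc 1 (k + 1 + (l + 1) - 1), eCoeff (k + 1) (l + 1) r * b⁻¹ ^ r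
      = -∑ j ∈ range (l + 1), ((k + j).choose j : ℝ) * b ^ j := by
  have hrestrict : ∑ r ∈ Icc 1 (k + 1 + (l + 1) - 1), eCoeff (k + 1) (l + 1) r * b⁻¹ ^ r
      = -∑ r ∈ Icc 1 (l + 1), ((k + (l + 1 - r)).choose (l + 1 - r) : ℝ) * b⁻¹ ^ r := by
    rw [sum_congr rfl fun r hr ↦ by
      rw [eCoeff_succ_succ (mem_Icc.mp hr).1 (by have := (mem_Icc.mp hr).2; omega)]]
    simp only [ite_mul, zero_mul, neg_mul, ← sum_filter, sum_neg_distrib]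
    congr 2
    ext r
    simp only [mem_filter, mem_Icc]
    omega
  rw [hrestrict, mul_neg, pow_mul_sum_Icc_inv_pow hb (fun j ↦ ((k + j).choose j : ℝ))]

theorem stmt_15 (α γ : ℝ) (hα : 0 < α) (hγ : 0 < γ) (hne : α ≠ γ)
    (k l : ℕ) (hk : 1 ≤ k) (hl : 1 ≤ l) :
    (α / (α - γ)) ^ k * (γ / (γ - α)) ^ l *
      ((∑ s ∈ Finset.Icc 1 k,
          ((ascPochhammer ℝ (k - s)).eval (l : ℝ)) / (Nat.factorial (k - s) : ℝ) *
            ((α - γ) / α) ^ s) -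
        ∑ r ∈ Finset.Icc 1 (k + l - 1),
          (∑ s ∈ Finset.Icc 1 (min r k), (-1 : ℝ) ^ s *
              (((ascPochhammer ℝ (r - s)).eval (s : ℝ)) / (Nat.factorial (r - s) : ℝ)) *
              (((ascPochhammer ℝ (k - s)).eval (l : ℝ)) / (Nat.factorial (k - s) : ℝ))) *
            ((γ - α) / γ) ^ r) = 1 := by
  have hαγ : α - γ ≠ 0 := sub_ne_zero.mpr hne
  have hγα : γ - α ≠ 0 := sub_ne_zero.mpr hne.symm
  set a := α / (α - γ) with ha_def
  set b := γ / (γ - α) with hb_def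
  have hab : a + b = 1 := by
    rw [ha_def, hb_def, ← neg_sub α γ, div_neg, ← sub_eq_add_neg, ← sub_div, div_self hαγ]
  rw [show (α - γ) / α = a⁻¹ from (inv_div _ _).symm,
    show (γ - α) / γ = b⁻¹ from (inv_div _ _).symm]
  simp only [← eCoeff.eq_1]
  have ha : a ≠ 0 := div_ne_zero hα.ne' hαγ
  have hb : b ≠ 0 := div_ne_zero hγ.ne' hγα
  obtain ⟨k, rfl⟩ := Nat.exists_eq_add_of_le' hk
  obtain ⟨l, rfl⟩ := Nat.exists_eq_add_of_le' hl
  have hfirst := pow_mul_sum_Icc_inv_pow ha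
    (fun j ↦ (ascPochhammer ℝ j).eval ((l + 1 : ℕ) : ℝ) / j !) (k + 1)
  have hsecond := pow_mul_sum_eCoeff_mul_inv_pow hb k l
  have hpoints := negBinomialSum_add_negBinomialSum hab k l
  simp only [negBinomialSum] at hpoints
  simp only [ascPochhammer_eval_natCast_div_factorial, add_right_comm l 1, add_tsub_cancel_right]
    at hfirst ⊢
  linear_combination b ^ (l + 1) * hfirst - a ^ (k + 1) * hsecond + hpoints
end

section
/- Let a, b be nonzero reals with a + b ≠ 0, let p, q ≥ 1 be integers, and for c ≠ 0 and m ≥ 1 define f_{c,m}(z) := c z^{c−1} (−c log z)^{m−1}/(m−1)! and F_{c,m}(z) := z^c ∑_{j=0}^{m−1} (−c log z)^j/j! on (0,1]. Then for 0 < z ≤ 1: f_{a,p}(z) · F_{b,q}(z) = (a/(a+b))^p ∑_{j=0}^{q−1} ((p)_j/j!) (b/(a+b))^j f_{a+b, p+j}(z). -/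
open Finset

/-- `f_{c,m}(z) = c z^{c-1} (-c log z)^{m-1}/(m-1)!` -/
noncomputable def fdens (c : ℝ) (m : ℕ) (z : ℝ) : ℝ :=
  c * z ^ (c - 1) * (-c * Real.log z) ^ (m - 1) / (Nat.factorial (m - 1) : ℝ)

/-- `F_{c,m}(z) = z^c ∑_{j=0}^{m-1} (-c log z)^j / j!` -/
noncomputable def Fcdf (c : ℝ) (m : ℕ) (z : ℝ) : ℝ :=
  z ^ c * ∑ j ∈ Finset.range m, (-c * Real.log z) ^ j / (Nat.factorial j : ℝ)

open Nat

/-!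
Write `p = n + 1` and `u = -log z`. Then `f_{c,n+1}(z) = c^{n+1} z^{c-1} u^n / n!` and the `j`-th term of
`F_{b,q}(z)` is `z^b b^j u^j / j!`, so the `j`-th term of the product is
`a^{n+1} b^j z^{a+b-1} u^{n+j} / (n! j!)`. This is `f_{a+b,n+1+j}(z)` times
`a^{n+1} b^j / (a+b)^{n+1+j}` times the binomial coefficient `(n+j)! / (n! j!) = (n+1)_j / j!`.
-/

theorem ascPochhammer_eval_natCast_succ {K : Type*} [Field K] [CharZero K] (n j : ℕ) :
    (ascPochhammer K j).eval ((n + 1 : ℕ) : K) = (n + j)! / n ! := by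
  rw [eq_div_iff (Nat.cast_ne_zero.mpr n.factorial_ne_zero), mul_comm, Nat.cast_succ,
    factorial_mul_ascPochhammer]

theorem fdens_succ (c : ℝ) (n : ℕ) (z : ℝ) :
    fdens c (n + 1) z = c ^ (n + 1) * z ^ (c - 1) * (-Real.log z) ^ n / n ! := by
  rw [fdens, Nat.add_sub_cancel, neg_mul_comm, mul_pow]
  ring

theorem Fcdf_eq_sum (c : ℝ) (m : ℕ) (z : ℝ) :
    Fcdf c m z = ∑ j ∈ range m, z ^ c * c ^ j * (-Real.log z) ^ j / j ! := by
  rw [Fcdf, mul_sum]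
  refine sum_congr rfl fun j _ => ?_
  rw [neg_mul_comm, mul_pow]
  ring

theorem stmt_17_general (a b : ℝ) (hab : a + b ≠ 0)
    (p q : ℕ) (hp : 1 ≤ p)
    (z : ℝ) (hz : z ∈ Set.Ioc (0 : ℝ) 1) :
    fdens a p z * Fcdf b q z
      = (a / (a + b)) ^ p *
          ∑ j ∈ Finset.range q,
            ((ascPochhammer ℝ j).eval (p : ℝ)) / (Nat.factorial j : ℝ) *
              (b / (a + b)) ^ j * fdens (a + b) (p + j) z := by
  obtain ⟨n, rfl⟩ := Nat.exists_eq_add_of_le' hp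
  have hzpow : z ^ (a + b - 1) = z ^ (a - 1) * z ^ b := by
    rw [← Real.rpow_add hz.1]
    ring_nf
  rw [Fcdf_eq_sum, mul_sum, mul_sum]
  refine sum_congr rfl fun j _ => ?_
  rw [ascPochhammer_eval_natCast_succ, add_right_comm, fdens_succ, fdens_succ, hzpow, div_pow,
    div_pow]
  field_simp
  ring

theorem stmt_17 (a b : ℝ) (ha : a ≠ 0) (hb : b ≠ 0) (hab : a + b ≠ 0)
    (p q : ℕ) (hp : 1 ≤ p) (hq : 1 ≤ q)
    (z : ℝ) (hz : z ∈ Set.Ioc (0 : ℝ) 1) :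
    fdens a p z * Fcdf b q z
      = (a / (a + b)) ^ p *
          ∑ j ∈ Finset.range q,
            ((ascPochhammer ℝ j).eval (p : ℝ)) / (Nat.factorial j : ℝ) *
              (b / (a + b)) ^ j * fdens (a + b) (p + j) z :=
  stmt_17_general a b hab p q hp z hz
end

section
/- Let U be uniform on (0,1], β > 0, and let M be a Lévy measure on ℝ^d (i.e., ∫ min(1, ‖x‖²) M(dx) < ∞ and M({0}) = 0). Then the measure M^{β}(A) := β ∫_0^1 M(s^{−1}A) s^{β−1} ds, for Borel A ⊆ ℝ^d \ {0}, is again a Lévy measure: ∫ min(1, ‖x‖²) M^{β}(dx) < ∞. -/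
/-!
With `ν` the probability measure of density `β s^(β-1)` on `(0,1]` (the law of `U^(1/β)`),
`M^β` is the image of `ν ⊗ M` under `(s, x) ↦ s • x`. Since `min 1 ‖x‖²` does not increase
under scalings by `|s| ≤ 1`, Tonelli gives `∫ min 1 ‖y‖² dM^β ≤ ∫ min 1 ‖x‖² dM`.
-/

open MeasureTheory ENNReal Set

theorem ofReal_min_one_norm_sq_smul_le {E : Type*} [SeminormedAddCommGroup E] [NormedSpace ℝ E]
    {s : ℝ} (hs : |s| ≤ 1) (x : E) :
    ENNReal.ofReal (min 1 (‖s • x‖ ^ 2)) ≤ ENNReal.ofReal (min 1 (‖x‖ ^ 2)) := by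
  have : ‖s • x‖ ≤ ‖x‖ := by
    rw [norm_smul, Real.norm_eq_abs]
    exact mul_le_of_le_one_left (norm_nonneg x) hs
  gcongr

noncomputable def powerDensityMeasure (β : ℝ) : Measure ℝ :=
  (volume.restrict (Ioc 0 1)).withDensity fun s => ENNReal.ofReal (β * s ^ (β - 1))

instance (β : ℝ) : SFinite (powerDensityMeasure β) := by
  unfold powerDensityMeasure; infer_instance

theorem ae_powerDensityMeasure_mem_Ioc (β : ℝ) : ∀ᵐ s ∂powerDensityMeasure β, s ∈ Ioc 0 1 :=
  withDensity_absolutelyContinuous _ _ (ae_restrict_mem measurableSet_Ioc)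

theorem powerDensityMeasure_univ {β : ℝ} (hβ : 0 < β) : powerDensityMeasure β univ = 1 := by
  have hint : IntegrableOn (fun s : ℝ => β * s ^ (β - 1)) (Ioc 0 1) :=
    ((intervalIntegral.intervalIntegrable_rpow' (by linarith)).const_mul β).1
  rw [powerDensityMeasure, withDensity_apply _ MeasurableSet.univ, Measure.restrict_univ,
    ← ofReal_integral_eq_lintegral_ofReal hint, ← intervalIntegral.integral_of_le zero_le_one,
    intervalIntegral.integral_const_mul, integral_rpow (by left; linarith)]
  · simp [hβ.ne']
  · filter_upwards [ae_restrict_mem measurableSet_Ioc] with s hs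
    exact mul_nonneg hβ.le (Real.rpow_nonneg hs.1.le _)

section ScaleMixture

variable {E : Type*} [MeasurableSpace E] [SMul ℝ E]

theorem map_smul_prod_apply [MeasurableSMul₂ ℝ E] (ν : Measure ℝ) [SFinite ν] (M : Measure E)
    [SFinite M] {A : Set E} (hA : MeasurableSet A) :
    (ν.prod M).map (fun p => p.1 • p.2) A = ∫⁻ s, M ((fun x => s • x) ⁻¹' A) ∂ν := by
  have hsmul : Measurable fun p : ℝ × E => p.1 • p.2 := measurable_fst.smul measurable_snd
  rw [Measure.map_apply hsmul hA, Measure.prod_apply (hsmul hA)]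
  rfl

theorem lintegral_map_smul_prod_le (ν : Measure ℝ) (M : Measure E) {g : E → ℝ≥0∞}
    (hg : ∀ᵐ s ∂ν, ∀ x, g (s • x) ≤ g x) :
    ∫⁻ x, g x ∂(ν.prod M).map (fun p => p.1 • p.2) ≤ ν univ * ∫⁻ x, g x ∂M :=
  calc ∫⁻ x, g x ∂(ν.prod M).map (fun p => p.1 • p.2)
      ≤ ∫⁻ p, g (p.1 • p.2) ∂ν.prod M := lintegral_map_le _ _
    _ ≤ ∫⁻ s, ∫⁻ x, g (s • x) ∂M ∂ν := lintegral_prod_le _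
    _ ≤ ∫⁻ _, ∫⁻ x, g x ∂M ∂ν := lintegral_mono_ae (hg.mono fun _ hs => lintegral_mono hs)
    _ = ν univ * ∫⁻ x, g x ∂M := by rw [lintegral_const, mul_comm]

theorem eq_map_smul_prod_powerDensityMeasure [MeasurableSMul₂ ℝ E] {M : Measure E} [SFinite M]
    {β : ℝ} {Mβ : Measure E}
    (hMβ : ∀ A : Set E, MeasurableSet A →
      Mβ A = ∫⁻ s in Ioc (0 : ℝ) 1,
        M ((fun x => s • x) ⁻¹' A) * ENNReal.ofReal (β * s ^ (β - 1))) :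
    Mβ = ((powerDensityMeasure β).prod M).map (fun p => p.1 • p.2) := by
  ext A hA
  have hdensity : Measurable fun s : ℝ => ENNReal.ofReal (β * s ^ (β - 1)) := by fun_prop
  rw [hMβ A hA, map_smul_prod_apply _ _ hA, powerDensityMeasure,
    lintegral_withDensity_eq_lintegral_mul_non_measurable _ hdensity
      (ae_of_all _ fun _ => ofReal_lt_top)]
  simp only [Pi.mul_apply, mul_comm]

end ScaleMixture

theorem stmt_18_general (d : ℕ) (M : Measure (EuclideanSpace ℝ (Fin d)))
    [SigmaFinite M]
    (hMlevy : ∫⁻ x, ENNReal.ofReal (min 1 (‖x‖ ^ 2)) ∂M < ⊤)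
    (β : ℝ) (hβ : 0 < β)
    (Mβ : Measure (EuclideanSpace ℝ (Fin d)))
    (hMβ : ∀ A : Set (EuclideanSpace ℝ (Fin d)), MeasurableSet A →
      Mβ A = ∫⁻ s in Set.Ioc (0 : ℝ) 1,
        M ((fun x => s • x) ⁻¹' A) * ENNReal.ofReal (β * s ^ (β - 1))) :
    ∫⁻ x, ENNReal.ofReal (min 1 (‖x‖ ^ 2)) ∂Mβ < ⊤ := by
  have hcontract : ∀ᵐ s ∂powerDensityMeasure β, ∀ x : EuclideanSpace ℝ (Fin d),
      ENNReal.ofReal (min 1 (‖s • x‖ ^ 2)) ≤ ENNReal.ofReal (min 1 (‖x‖ ^ 2)) :=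
    (ae_powerDensityMeasure_mem_Ioc β).mono fun s hs =>
      ofReal_min_one_norm_sq_smul_le (abs_le.2 ⟨by linarith [hs.1], hs.2⟩)
  calc ∫⁻ x, ENNReal.ofReal (min 1 (‖x‖ ^ 2)) ∂Mβ
      ≤ powerDensityMeasure β univ * ∫⁻ x, ENNReal.ofReal (min 1 (‖x‖ ^ 2)) ∂M := by
        rw [eq_map_smul_prod_powerDensityMeasure hMβ]
        exact lintegral_map_smul_prod_le _ _ hcontract
    _ < ⊤ := by rwa [powerDensityMeasure_univ hβ, one_mul]

theorem stmt_18 (d : ℕ) (M : Measure (EuclideanSpace ℝ (Fin d)))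
    [SigmaFinite M] (hM0 : M {0} = 0)
    (hMlevy : ∫⁻ x, ENNReal.ofReal (min 1 (‖x‖ ^ 2)) ∂M < ⊤)
    (β : ℝ) (hβ : 0 < β)
    (Mβ : Measure (EuclideanSpace ℝ (Fin d)))
    (hMβ : ∀ A : Set (EuclideanSpace ℝ (Fin d)), MeasurableSet A →
      Mβ A = ∫⁻ s in Set.Ioc (0 : ℝ) 1,
        M ((fun x => s • x) ⁻¹' A) * ENNReal.ofReal (β * s ^ (β - 1))) :
    ∫⁻ x, ENNReal.ofReal (min 1 (‖x‖ ^ 2)) ∂Mβ < ⊤ :=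
  stmt_18_general d M hMlevy β hβ Mβ hMβ
end
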